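/- arXiv:1904.06169 — 6 statements merged into one kernel-verified Lean document; each statement's English description precedes it below -/
import Mathlib

section
/- Let c₁ > 0 and suppose (γ_j)_{j∈ℕ} is a real sequence. Define the quadratic-remainder sum S = ∑_{j=1}^∞ ∑_{k=1}^∞ |v(ka + γ_j + … + γ_{j+k-1}) - v(ka) - v'(ka)(γ_j + … + γ_{j+k-1})| where v is C² with sup_{r ≥ z_min}|v''(r)| =: c₁ < ∞ and sup_{r ≥ k z_min}|v''(r)| ≤ |v''(k z_min)| for k ≥ 2 and ∑_k k²|v''(k z_min)| < ∞. If all γ_j + a ≥ z_min, then S ≤ (c₁ + ∑_{k=1}^∞ k²|v''(k z_min)|) ∑_j γ_j². -/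
/-!
Each summand is a first-order Taylor remainder at `x = (k+1) a` with increment
`h = γ_j + ⋯ + γ_{j+k}`. Both `x` and `x + h = ∑ (γ_i + a)` lie in `[(k+1) z_min, ∞)`, where
`|v''|` is at most `c₁` for `k = 0` and at most `|v''((k+1) z_min)|` otherwise, so the remainder is
bounded by that curvature times `h² ≤ (k+1) (γ_j² + ⋯ + γ_{j+k}²)`. Summing over `j` costs another
factor `k+1`, and summing the resulting weights `(k+1)² |v''((k+1) z_min)|` over `k` gives the
constant.
-/

open Finset

theorem abs_taylor_remainder_le {v : ℝ → ℝ} (hv : ContDiff ℝ 2 v) {x h C : ℝ}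
    (hC : ∀ r ∈ Set.uIcc x (x + h), |deriv (deriv v) r| ≤ C) :
    |v (x + h) - v x - deriv v x * h| ≤ C * h ^ 2 := by
  have hv₁ : Differentiable ℝ v := hv.differentiable (by norm_num)
  have hv₂ : Differentiable ℝ (deriv v) := (hv.iterate_deriv' 1 1).differentiable (by norm_num)
  have hC₀ : 0 ≤ C := (abs_nonneg _).trans (hC x Set.left_mem_uIcc)
  have hconv : Convex ℝ (Set.uIcc x (x + h)) := convex_uIcc _ _
  have hderiv : ∀ t ∈ Set.uIcc x (x + h), |deriv v t - deriv v x| ≤ C * |h| := fun t ht =>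
    calc |deriv v t - deriv v x| ≤ C * |t - x| := by
          simpa using hconv.norm_image_sub_le_of_norm_deriv_le (fun r _ => hv₂ r) hC
            Set.left_mem_uIcc ht
      _ ≤ C * |h| :=
          mul_le_mul_of_nonneg_left (by simpa using Set.abs_sub_left_of_mem_uIcc ht) hC₀
  have hmvt := hconv.norm_image_sub_le_of_norm_hasDerivWithin_le
    (f := fun t => v t - t * deriv v x) (f' := fun t => deriv v t - deriv v x)
    (fun r _ => ((hv₁ r).hasDerivAt.sub (hasDerivAt_mul_const (deriv v x))).hasDerivWithinAt)
    hderiv Set.left_mem_uIcc Set.right_mem_uIcc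
  calc |v (x + h) - v x - deriv v x * h|
      = |v (x + h) - (x + h) * deriv v x - (v x - x * deriv v x)| := by ring_nf
    _ ≤ C * |h| * |x + h - x| := by simpa using hmvt
    _ = C * h ^ 2 := by rw [add_sub_cancel_left, mul_assoc, ← abs_mul, ← sq, abs_sq]

theorem abs_taylor_remainder_sum_le {v : ℝ → ℝ} (hv : ContDiff ℝ 2 v) {a zmin C : ℝ}
    {γ : ℕ → ℝ} (s : Finset ℕ) (ha : zmin ≤ a) (hγ : ∀ i ∈ s, zmin ≤ γ i + a)
    (hC : ∀ r, #s * zmin ≤ r → |deriv (deriv v) r| ≤ C) :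
    |v (#s * a + ∑ i ∈ s, γ i) - v (#s * a) - deriv v (#s * a) * ∑ i ∈ s, γ i|
      ≤ C * (#s * ∑ i ∈ s, γ i ^ 2) := by
  have hC₀ : 0 ≤ C := (abs_nonneg _).trans (hC _ le_rfl)
  have hx : #s * zmin ≤ #s * a := by gcongr
  have hxh : #s * zmin ≤ #s * a + ∑ i ∈ s, γ i := by
    have := s.card_nsmul_le_sum (γ · + a) zmin hγ
    rw [sum_add_distrib, sum_const, nsmul_eq_mul, nsmul_eq_mul] at this
    linarith
  calc _ ≤ C * (∑ i ∈ s, γ i) ^ 2 := abs_taylor_remainder_le hv fun r hr =>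
        hC r ((le_inf hx hxh).trans hr.1)
    _ ≤ C * (#s * ∑ i ∈ s, γ i ^ 2) := by gcongr; exact sq_sum_le_card_mul_sum_sq

theorem summable_sum_Ico_add {G : Type*} [AddCommGroup G] [TopologicalSpace G]
    [IsTopologicalAddGroup G] {g : ℕ → G} (hg : Summable g) (n : ℕ) :
    Summable fun j => ∑ i ∈ Ico j (j + n), g i := by
  simp_rw [sum_Ico_eq_sum_range, add_tsub_cancel_left]
  exact summable_sum fun m _ => (summable_nat_add_iff m).2 hg

theorem tsum_sum_Ico_add_le {g : ℕ → ℝ} (hg₀ : 0 ≤ g) (hg : Summable g) (n : ℕ) :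
    ∑' j, ∑ i ∈ Ico j (j + n), g i ≤ n * ∑' i, g i := by
  simp_rw [sum_Ico_eq_sum_range, add_tsub_cancel_left]
  rw [Summable.tsum_finsetSum fun m _ => (summable_nat_add_iff m).2 hg]
  calc ∑ m ∈ range n, ∑' j, g (j + m) ≤ ∑ _m ∈ range n, ∑' i, g i :=
        sum_le_sum fun m _ => tsum_comp_le_tsum_of_inj hg hg₀ (add_left_injective m)
    _ = n * ∑' i, g i := by simp

theorem summable_and_tsum_le_of_le_sum_Ico {f g : ℕ → ℝ} (hf₀ : 0 ≤ f) (hg₀ : 0 ≤ g)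
    (hg : Summable g) {c : ℝ} (hc : 0 ≤ c) (n : ℕ)
    (hfg : ∀ j, f j ≤ c * ∑ i ∈ Ico j (j + n), g i) :
    Summable f ∧ ∑' j, f j ≤ c * (n * ∑' i, g i) := by
  have hB := (summable_sum_Ico_add hg n).mul_left c
  refine ⟨hB.of_nonneg_of_le hf₀ hfg, ?_⟩
  calc ∑' j, f j ≤ ∑' j, c * ∑ i ∈ Ico j (j + n), g i :=
        (hB.of_nonneg_of_le hf₀ hfg).tsum_le_tsum hfg hB
    _ ≤ c * (n * ∑' i, g i) := by
        rw [tsum_mul_left]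
        exact mul_le_mul_of_nonneg_left (tsum_sum_Ico_add_le hg₀ hg n) hc

theorem summable_and_tsum_prod_le {α β : Type*} {f : α × β → ℝ} {b : β → ℝ} (hf₀ : 0 ≤ f)
    (hslice : ∀ y, Summable fun x => f (x, y)) (hle : ∀ y, ∑' x, f (x, y) ≤ b y)
    (hb : Summable b) :
    Summable f ∧ ∑' q, f q ≤ ∑' y, b y := by
  have houter : Summable fun y => ∑' x, f (x, y) :=
    hb.of_nonneg_of_le (fun y => tsum_nonneg fun x => hf₀ _) hle
  have hswap : Summable fun p : β × α => f p.swap :=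
    (summable_prod_of_nonneg (f := fun p : β × α => f p.swap) fun p => hf₀ _).2
      ⟨hslice, houter⟩
  refine ⟨hswap.prod_symm, ?_⟩
  calc ∑' q, f q = ∑' p : β × α, f p.swap := ((Equiv.prodComm β α).tsum_eq f).symm
    _ = ∑' y, ∑' x, f (x, y) := hswap.tsum_prod
    _ ≤ ∑' y, b y := houter.tsum_le_tsum hle hb

noncomputable def curvatureBound (v : ℝ → ℝ) (zmin c₁ : ℝ) (n : ℕ) : ℝ :=
  if n = 1 then c₁ else |deriv (deriv v) (n * zmin)|

section curvatureBound

variable {v : ℝ → ℝ} {zmin c₁ : ℝ}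

theorem curvatureBound_nonneg (hc₁ : 0 ≤ c₁) (n : ℕ) : 0 ≤ curvatureBound v zmin c₁ n := by
  unfold curvatureBound
  split_ifs
  exacts [hc₁, abs_nonneg _]

theorem abs_deriv_deriv_le_curvatureBound (hc₁ : ∀ r : ℝ, zmin ≤ r → |deriv (deriv v) r| ≤ c₁)
    (hk : ∀ k : ℕ, 2 ≤ k → ∀ r : ℝ, (k : ℝ) * zmin ≤ r →
        |deriv (deriv v) r| ≤ |deriv (deriv v) ((k : ℝ) * zmin)|)
    {n : ℕ} (hn : n ≠ 0) {r : ℝ} (hr : n * zmin ≤ r) :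
    |deriv (deriv v) r| ≤ curvatureBound v zmin c₁ n := by
  unfold curvatureBound
  split_ifs with h1
  · subst h1
    exact hc₁ r (by simpa using hr)
  · exact hk n (by omega) r hr

theorem summable_and_tsum_curvatureBound_le (hc₁ : 0 ≤ c₁)
    (hsum : Summable fun k : ℕ => (k : ℝ) ^ 2 * |deriv (deriv v) (k * zmin)|) :
    (Summable fun k : ℕ => ((k : ℝ) + 1) ^ 2 * curvatureBound v zmin c₁ (k + 1)) ∧
      ∑' k : ℕ, ((k : ℝ) + 1) ^ 2 * curvatureBound v zmin c₁ (k + 1)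
        ≤ c₁ + ∑' k : ℕ, (k : ℝ) ^ 2 * |deriv (deriv v) (k * zmin)| := by
  set f : ℕ → ℝ := fun n => (n : ℝ) ^ 2 * curvatureBound v zmin c₁ n
  have hf₀ : 0 ≤ f := fun n => mul_nonneg (sq_nonneg _) (curvatureBound_nonneg hc₁ n)
  have hle : ∀ n,
      f n ≤ (if n = 1 then c₁ else 0) + (n : ℝ) ^ 2 * |deriv (deriv v) (n * zmin)| := by
    intro n
    simp only [f, curvatureBound]
    split_ifs with h1
    · subst h1; simp
    · simp
  have hdom := (hasSum_ite_eq 1 c₁).summable.add hsum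
  have hf : Summable f := hdom.of_nonneg_of_le hf₀ hle
  have hshift (k : ℕ) : f (k + 1) = ((k : ℝ) + 1) ^ 2 * curvatureBound v zmin c₁ (k + 1) := by
    simp [f]
  refine ⟨((summable_nat_add_iff 1).2 hf).congr hshift, ?_⟩
  calc ∑' k : ℕ, ((k : ℝ) + 1) ^ 2 * curvatureBound v zmin c₁ (k + 1)
      = ∑' n, f n := by rw [hf.tsum_eq_zero_add, tsum_congr hshift]; simp [f]
    _ ≤ ∑' n : ℕ, ((if n = 1 then c₁ else 0) + (n : ℝ) ^ 2 * |deriv (deriv v) (n * zmin)|) :=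
        hf.tsum_le_tsum hle hdom
    _ = c₁ + ∑' k : ℕ, (k : ℝ) ^ 2 * |deriv (deriv v) (k * zmin)| := by
        rw [Summable.tsum_add (hasSum_ite_eq 1 c₁).summable hsum, tsum_ite_eq]

end curvatureBound

theorem stmt_6_general (v : ℝ → ℝ) (a zmin c₁ : ℝ) (γ : ℕ → ℝ)
    (hv : ContDiff ℝ 2 v) (ha : zmin ≤ a)
    (hc₁ : ∀ r : ℝ, zmin ≤ r → |deriv (deriv v) r| ≤ c₁)
    (hk : ∀ k : ℕ, 2 ≤ k → ∀ r : ℝ, (k : ℝ) * zmin ≤ r →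
        |deriv (deriv v) r| ≤ |deriv (deriv v) ((k : ℝ) * zmin)|)
    (hsum : Summable (fun k : ℕ => ((k : ℝ)) ^ 2 * |deriv (deriv v) ((k : ℝ) * zmin)|))
    (hγ : ∀ j : ℕ, zmin ≤ γ j + a)
    (hγ2 : Summable (fun j : ℕ => (γ j) ^ 2)) :
    Summable (fun q : ℕ × ℕ =>
        |v (((q.2 : ℝ) + 1) * a + ∑ i ∈ Finset.Ico q.1 (q.1 + (q.2 + 1)), γ i)
          - v (((q.2 : ℝ) + 1) * a)
          - deriv v (((q.2 : ℝ) + 1) * a) * ∑ i ∈ Finset.Ico q.1 (q.1 + (q.2 + 1)), γ i|) ∧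
    (∑' q : ℕ × ℕ,
        |v (((q.2 : ℝ) + 1) * a + ∑ i ∈ Finset.Ico q.1 (q.1 + (q.2 + 1)), γ i)
          - v (((q.2 : ℝ) + 1) * a)
          - deriv v (((q.2 : ℝ) + 1) * a) * ∑ i ∈ Finset.Ico q.1 (q.1 + (q.2 + 1)), γ i|)
      ≤ (c₁ + ∑' k : ℕ, ((k : ℝ)) ^ 2 * |deriv (deriv v) ((k : ℝ) * zmin)|)
          * ∑' j : ℕ, (γ j) ^ 2 := by
  set R : ℕ × ℕ → ℝ := fun q =>
    |v (((q.2 : ℝ) + 1) * a + ∑ i ∈ Finset.Ico q.1 (q.1 + (q.2 + 1)), γ i)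
      - v (((q.2 : ℝ) + 1) * a)
      - deriv v (((q.2 : ℝ) + 1) * a) * ∑ i ∈ Finset.Ico q.1 (q.1 + (q.2 + 1)), γ i|
  have hc₁₀ : 0 ≤ c₁ := (abs_nonneg _).trans (hc₁ zmin le_rfl)
  have hterm (j k : ℕ) :
      R (j, k) ≤
        curvatureBound v zmin c₁ (k + 1) * (k + 1) * ∑ i ∈ Ico j (j + (k + 1)), γ i ^ 2 := by
    have hcard : ((#(Ico j (j + (k + 1))) : ℕ) : ℝ) = k + 1 := by simp
    have hrem := abs_taylor_remainder_sum_le hv (Ico j (j + (k + 1))) ha (fun i _ => hγ i)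
      fun r hr => abs_deriv_deriv_le_curvatureBound hc₁ hk k.succ_ne_zero (by simpa using hr)
    rwa [hcard, ← mul_assoc] at hrem
  have hrow (k : ℕ) := summable_and_tsum_le_of_le_sum_Ico (fun j => abs_nonneg _)
    (fun i => sq_nonneg (γ i)) hγ2
    (mul_nonneg (curvatureBound_nonneg hc₁₀ _) k.cast_add_one_pos.le) (k + 1) (hterm · k)
  obtain ⟨hW, hWle⟩ := summable_and_tsum_curvatureBound_le hc₁₀ hsum
  obtain ⟨hR, hRle⟩ := summable_and_tsum_prod_le (f := R) (fun q => abs_nonneg _)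
    (fun k => (hrow k).1) (fun k => (hrow k).2.trans_eq (by push_cast; ring))
    (hW.mul_right (∑' j : ℕ, γ j ^ 2))
  refine ⟨hR, hRle.trans ?_⟩
  rw [tsum_mul_right]
  exact mul_le_mul_of_nonneg_right hWle (tsum_nonneg fun j => sq_nonneg _)

/-- Taylor-remainder estimate for the surface energy: under bounds on the
second derivative of `v`, the double sum of quadratic remainders is summable
and bounded by `(c₁ + ∑ k² |v''(k z_min)|) ∑ γ_j²`. -/
theorem stmt_6 (v : ℝ → ℝ) (a zmin c₁ : ℝ) (γ : ℕ → ℝ)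
    (hv : ContDiff ℝ 2 v) (hzmin : 0 < zmin) (ha : zmin ≤ a)
    (hc₁ : ∀ r : ℝ, zmin ≤ r → |deriv (deriv v) r| ≤ c₁)
    (hk : ∀ k : ℕ, 2 ≤ k → ∀ r : ℝ, (k : ℝ) * zmin ≤ r →
        |deriv (deriv v) r| ≤ |deriv (deriv v) ((k : ℝ) * zmin)|)
    (hsum : Summable (fun k : ℕ => ((k : ℝ)) ^ 2 * |deriv (deriv v) ((k : ℝ) * zmin)|))
    (hγ : ∀ j : ℕ, zmin ≤ γ j + a)
    (hγ2 : Summable (fun j : ℕ => (γ j) ^ 2)) :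
    Summable (fun q : ℕ × ℕ =>
        |v (((q.2 : ℝ) + 1) * a + ∑ i ∈ Finset.Ico q.1 (q.1 + (q.2 + 1)), γ i)
          - v (((q.2 : ℝ) + 1) * a)
          - deriv v (((q.2 : ℝ) + 1) * a) * ∑ i ∈ Finset.Ico q.1 (q.1 + (q.2 + 1)), γ i|) ∧
    (∑' q : ℕ × ℕ,
        |v (((q.2 : ℝ) + 1) * a + ∑ i ∈ Finset.Ico q.1 (q.1 + (q.2 + 1)), γ i)
          - v (((q.2 : ℝ) + 1) * a)
          - deriv v (((q.2 : ℝ) + 1) * a) * ∑ i ∈ Finset.Ico q.1 (q.1 + (q.2 + 1)), γ i|)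
      ≤ (c₁ + ∑' k : ℕ, ((k : ℝ)) ^ 2 * |deriv (deriv v) ((k : ℝ) * zmin)|)
          * ∑' j : ℕ, (γ j) ^ 2 :=
  stmt_6_general v a zmin c₁ γ hv ha hc₁ hk hsum hγ hγ2
end

section
/- Let (Q_N) be probability measures on ℝ_+^{N-1} with densities proportional to exp(-β ℰ_N(z)) where ℰ_N(z) - ℰ_N(z') ≥ p·r whenever z' is obtained from z by decreasing a single coordinate z_k ≥ z_max + r to z_k - r (p, r, β > 0). Then Q_N({z : z_k ≥ z_max + r}) ≤ exp(-β p r) for every k and r ≥ 0. -/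
/-!
Translating by `-r` in the `k`-th coordinate is Lebesgue-measure preserving, maps
`{z_k ≥ z_max + r}` back into the positive orthant (as `z_max > 0`), and multiplies the
Boltzmann weight `exp (-β ℰ)` by at least `exp (β p r)`. Hence the weight of the tail
event is at most `exp (-β p r)` times the weight of its translate, which is part of the
orthant.
-/

open MeasureTheory

theorem setIntegral_le_mul_setIntegral_of_le_shift {G : Type*} [AddGroup G] [MeasurableSpace G]
    [MeasurableAdd G] {μ : Measure G} [μ.IsAddRightInvariant] {f : G → ℝ} {A Ω : Set G} {v : G}
    {c : ℝ} (hc : 0 ≤ c) (hA : MeasurableSet A) (hAΩ : A ⊆ Ω) (hshift : ∀ z ∈ A, z - v ∈ Ω)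
    (hf : IntegrableOn f Ω μ) (hf_nonneg : 0 ≤ᵐ[μ.restrict Ω] f)
    (hle : ∀ z ∈ A, f z ≤ c * f (z - v)) :
    ∫ z in A, f z ∂μ ≤ c * ∫ z in Ω, f z ∂μ := by
  have hpres := measurePreserving_sub_right μ v
  have hemb := measurableEmbedding_subRight v
  have hshift_sub : (· - v) '' A ⊆ Ω := Set.image_subset_iff.mpr hshift
  have hshift_int : IntegrableOn (fun z => f (z - v)) A μ := by
    rw [← hemb.injective.preimage_image A]
    exact (hpres.integrableOn_comp_preimage hemb).mpr (hf.mono_set hshift_sub)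
  calc ∫ z in A, f z ∂μ
      ≤ ∫ z in A, c * f (z - v) ∂μ :=
        setIntegral_mono_on (hf.mono_set hAΩ) (hshift_int.const_mul c) hA hle
    _ = c * ∫ z in (· - v) '' A, f z ∂μ := by
        rw [integral_const_mul, hpres.setIntegral_image_emb hemb]
    _ ≤ c * ∫ z in Ω, f z ∂μ :=
        mul_le_mul_of_nonneg_left (setIntegral_mono_set hf hf_nonneg hshift_sub.eventuallyLE) hc

theorem Function.update_sub_eq_sub_single {ι M : Type*} [DecidableEq ι] [AddGroup M]
    (z : ι → M) (k : ι) (r : M) : Function.update z k (z k - r) = z - Pi.single k r := by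
  ext i
  rcases eq_or_ne i k with rfl | hi <;> simp [*]

theorem measurableSet_setOf_forall_pos (ι : Type*) [Countable ι] :
    MeasurableSet {z : ι → ℝ | ∀ i, 0 < z i} := by
  simp only [Set.ofPred_forall]
  exact .iInter fun i => measurableSet_lt measurable_const (measurable_pi_apply i)

theorem stmt_8_general (N : ℕ) (k : Fin N) (ℰ : (Fin N → ℝ) → ℝ) (β p r zmax : ℝ)
    (hβ : 0 < β) (hzmax : 0 < zmax)
    (hdrop : ∀ z : Fin N → ℝ, zmax + r ≤ z k →
        ℰ (Function.update z k (z k - r)) ≤ ℰ z - p * r)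
    (hint : IntegrableOn (fun z => Real.exp (-β * ℰ z))
        {z : Fin N → ℝ | ∀ i, 0 < z i} volume) :
    (∫ z in {z : Fin N → ℝ | (∀ i, 0 < z i) ∧ zmax + r ≤ z k},
        Real.exp (-β * ℰ z))
      ≤ Real.exp (-β * p * r) *
        ∫ z in {z : Fin N → ℝ | ∀ i, 0 < z i}, Real.exp (-β * ℰ z) := by
  have htail : MeasurableSet {z : Fin N → ℝ | (∀ i, 0 < z i) ∧ zmax + r ≤ z k} :=
    (measurableSet_setOf_forall_pos _).inter
      (measurableSet_le measurable_const (measurable_pi_apply k))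
  refine setIntegral_le_mul_setIntegral_of_le_shift (v := Pi.single k r) (Real.exp_pos _).le
    htail (fun z hz => hz.1) (fun z ⟨hz, hzk⟩ i => ?_) hint
    (.of_forall fun z => (Real.exp_pos _).le) (fun z ⟨_, hzk⟩ => ?_)
  · rcases eq_or_ne i k with rfl | hi
    · simp only [Pi.sub_apply, Pi.single_eq_same]
      linarith
    · simpa [hi] using hz i
  · have hweight := mul_le_mul_of_nonneg_left (hdrop z hzk) hβ.le
    rw [← Function.update_sub_eq_sub_single, ← Real.exp_add, Real.exp_le_exp]
    linarith

/-- Exponential tail bound for finite-volume Gibbs measures: if decreasing a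
single long spacing `z_k ≥ z_max + r` by `r` lowers the energy by at least
`p r`, then the Gibbs probability of `{z_k ≥ z_max + r}` is at most
`exp(-β p r)`. -/
theorem stmt_8 (N : ℕ) (k : Fin N) (ℰ : (Fin N → ℝ) → ℝ) (β p r zmax : ℝ)
    (hβ : 0 < β) (hp : 0 < p) (hr : 0 ≤ r) (hzmax : 0 < zmax)
    (hmeas : Measurable ℰ)
    (hdrop : ∀ z : Fin N → ℝ, zmax + r ≤ z k →
        ℰ (Function.update z k (z k - r)) ≤ ℰ z - p * r)
    (hint : IntegrableOn (fun z => Real.exp (-β * ℰ z))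
        {z : Fin N → ℝ | ∀ i, 0 < z i} volume) :
    (∫ z in {z : Fin N → ℝ | (∀ i, 0 < z i) ∧ zmax + r ≤ z k},
        Real.exp (-β * ℰ z))
      ≤ Real.exp (-β * p * r) *
        ∫ z in {z : Fin N → ℝ | ∀ i, 0 < z i}, Real.exp (-β * ℰ z) :=
  stmt_8_general N k ℰ β p r zmax hβ hzmax hdrop hint
end

section
/- Let v : (0,∞) → ℝ be a pair potential with v(r) = O(r^{-s}) as r → ∞ for s > 2, and define var_k(h) = 2 sup_z |∑_{j=k+1}^∞ v(z₁+…+z_j)| over sequences with all z_j ≥ r_hc > 0. Then var_k(h) = O(k^{-(s-1)}) and C_q := ∑_{k=q+1}^∞ var_k(h) = O(q^{-(s-2)}) as q → ∞; in particular ∑_k var_k(h) < ∞. -/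
/-!
Every partial sum `z₀ + ⋯ + z_{n-1}` of an admissible sequence is at least `n * rhc`, so the
tail series defining `var k` is dominated termwise by `C * rhc ^ (-s) * n ^ (-s)` for `n > k`.
Comparing `∑_{n > k} n ^ (-s)` with `∫_k^∞ x ^ (-s) dx` gives `var k = O(k ^ (-(s - 1)))`, and
the same comparison applied to this bound gives the `q ^ (-(s - 2))` decay of the tails.
-/

open Finset

theorem sum_range_add_rpow_neg_le {x₀ t : ℝ} (hx₀ : 0 < x₀) (ht : 1 < t) (N : ℕ) :
    ∑ i ∈ range N, (x₀ + ↑(i + 1)) ^ (-t) ≤ x₀ ^ (-(t - 1)) / (t - 1) := by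
  have hanti : AntitoneOn (fun x : ℝ => x ^ (-t)) (Set.Icc x₀ (x₀ + N)) :=
    (Real.antitoneOn_rpow_Ioi_of_exponent_nonpos (by linarith)).mono
      fun x hx => lt_of_lt_of_le hx₀ hx.1
  have hend : 0 < x₀ + N := by positivity
  calc ∑ i ∈ range N, (x₀ + ↑(i + 1)) ^ (-t)
      ≤ ∫ x in x₀..x₀ + N, x ^ (-t) := hanti.sum_le_integral
    _ = (x₀ ^ (-(t - 1)) - (x₀ + N) ^ (-(t - 1))) / (t - 1) := by
      rw [integral_rpow (Or.inr ⟨by linarith, Set.notMem_uIcc_of_lt hx₀ hend⟩),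
        show -t + 1 = -(t - 1) by ring, div_neg, ← neg_div, neg_sub]
    _ ≤ x₀ ^ (-(t - 1)) / (t - 1) := by
      gcongr
      exact sub_le_self _ (Real.rpow_nonneg hend.le _)

theorem tsum_nat_add_le_of_le_rpow_neg {f : ℕ → ℝ} {A t : ℝ} (hf₀ : ∀ k, 0 ≤ f k)
    (hA : 0 ≤ A) (ht : 1 < t) (hf : ∀ k : ℕ, 1 ≤ k → f k ≤ A * (k : ℝ) ^ (-t))
    {q : ℕ} (hq : 1 ≤ q) :
    ∑' k : ℕ, f (q + 1 + k) ≤ A / (t - 1) * (q : ℝ) ^ (-(t - 1)) := by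
  refine Real.tsum_le_of_sum_range_le (fun k => hf₀ _) fun N => ?_
  calc ∑ k ∈ range N, f (q + 1 + k)
      ≤ ∑ k ∈ range N, A * ((q : ℝ) + ↑(k + 1)) ^ (-t) := by
        gcongr with k
        have hk := hf (q + 1 + k) (by omega)
        rwa [show ((q + 1 + k : ℕ) : ℝ) = q + ↑(k + 1) by push_cast; ring] at hk
    _ = A * ∑ k ∈ range N, ((q : ℝ) + ↑(k + 1)) ^ (-t) := (mul_sum _ _ _).symm
    _ ≤ A * ((q : ℝ) ^ (-(t - 1)) / (t - 1)) := by
        gcongr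
        exact sum_range_add_rpow_neg_le (by exact_mod_cast hq) ht N
    _ = A / (t - 1) * (q : ℝ) ^ (-(t - 1)) := by ring

theorem summable_of_le_rpow_neg {f : ℕ → ℝ} {A t : ℝ} (hf₀ : ∀ k, 0 ≤ f k) (ht : 1 < t)
    (hf : ∀ k : ℕ, 1 ≤ k → f k ≤ A * (k : ℝ) ^ (-t)) : Summable f := by
  rw [← summable_nat_add_iff 1]
  have hdom : Summable fun k : ℕ => A * ((k + 1 : ℕ) : ℝ) ^ (-t) :=
    ((summable_nat_add_iff 1).2 (Real.summable_nat_rpow.2 (by linarith))).mul_left A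
  exact hdom.of_nonneg_of_le (fun k => hf₀ _) fun k => hf (k + 1) (by omega)

theorem summable_natCast_add_rpow_neg (m : ℕ) {t : ℝ} (ht : 1 < t) :
    Summable fun i : ℕ => ((m + i : ℕ) : ℝ) ^ (-t) := by
  have := (summable_nat_add_iff m).2 (Real.summable_nat_rpow.2 (by linarith : -t < -1))
  simpa only [add_comm] using this

section Potential

variable {v : ℝ → ℝ} {C rhc s : ℝ}

theorem abs_apply_sum_range_le (hv : ∀ r : ℝ, rhc ≤ r → |v r| ≤ C * r ^ (-s))
    (hC : 0 ≤ C) (hrhc : 0 < rhc) (hs : 0 ≤ s) {z : ℕ → ℝ} (hz : ∀ j, rhc ≤ z j)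
    {n : ℕ} (hn : n ≠ 0) :
    |v (∑ l ∈ range n, z l)| ≤ C * rhc ^ (-s) * (n : ℝ) ^ (-s) := by
  have hn1 : (1 : ℝ) ≤ n := by exact_mod_cast Nat.one_le_iff_ne_zero.2 hn
  have hsum : n * rhc ≤ ∑ l ∈ range n, z l := by
    simpa [nsmul_eq_mul] using card_nsmul_le_sum (range n) z rhc fun l _ => hz l
  have hpos : 0 < n * rhc := by positivity
  have hrhc_le : rhc ≤ ∑ l ∈ range n, z l := le_trans (by nlinarith) hsum
  calc |v (∑ l ∈ range n, z l)|
      ≤ C * (∑ l ∈ range n, z l) ^ (-s) := hv _ hrhc_le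
    _ ≤ C * (n * rhc) ^ (-s) :=
        mul_le_mul_of_nonneg_left (Real.rpow_le_rpow_of_nonpos hpos hsum (neg_nonpos.2 hs)) hC
    _ = C * rhc ^ (-s) * (n : ℝ) ^ (-s) := by
        rw [Real.mul_rpow (by positivity) hrhc.le]; ring

theorem abs_tsum_apply_sum_range_le (hv : ∀ r : ℝ, rhc ≤ r → |v r| ≤ C * r ^ (-s))
    (hC : 0 ≤ C) (hrhc : 0 < rhc) (hs : 1 < s) {z : ℕ → ℝ} (hz : ∀ j, rhc ≤ z j) (k : ℕ) :
    |∑' i : ℕ, v (∑ l ∈ range (k + 1 + i), z l)| ≤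
      C * rhc ^ (-s) * ∑' i : ℕ, ((k + 1 + i : ℕ) : ℝ) ^ (-s) := by
  rw [← tsum_mul_left]
  exact tsum_of_norm_bounded ((summable_natCast_add_rpow_neg (k + 1) hs).mul_left _).hasSum
    fun i => (Real.norm_eq_abs _).trans_le <|
      abs_apply_sum_range_le hv hC hrhc (by linarith) hz (n := k + 1 + i) (by omega)

theorem iSup_abs_tsum_apply_sum_range_le (hv : ∀ r : ℝ, rhc ≤ r → |v r| ≤ C * r ^ (-s))
    (hC : 0 ≤ C) (hrhc : 0 < rhc) (hs : 1 < s) (k : ℕ) :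
    ⨆ z : {z : ℕ → ℝ // ∀ j, rhc ≤ z j}, |∑' i : ℕ, v (∑ l ∈ range (k + 1 + i), z.1 l)| ≤
      C * rhc ^ (-s) * ∑' i : ℕ, ((k + 1 + i : ℕ) : ℝ) ^ (-s) :=
  Real.iSup_le (fun z => abs_tsum_apply_sum_range_le hv hC hrhc hs z.2 k)
    (by positivity)

end Potential

/-- Decay of the variation seminorms of the single-site energy: if
`|v(r)| ≤ C r^{-s}` for `r ≥ r_hc > 0` with `s > 2`, and
`var_k = 2 sup_z |∑_{j=k+1}^∞ v(z₁+…+z_j)|` over sequences with all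
`z_j ≥ r_hc`, then `var_k = O(k^{-(s-1)})`,
`C_q = ∑_{k>q} var_k = O(q^{-(s-2)})`, and in particular `∑_k var_k < ∞`. -/
theorem stmt_12 (v : ℝ → ℝ) (C rhc s : ℝ) (var : ℕ → ℝ)
    (hC : 0 < C) (hrhc : 0 < rhc) (hs : 2 < s)
    (hv : ∀ r : ℝ, rhc ≤ r → |v r| ≤ C * r ^ (-s))
    (hvar : ∀ k : ℕ, var k =
        2 * ⨆ z : {z : ℕ → ℝ // ∀ j, rhc ≤ z j},
          |∑' i : ℕ, v (∑ l ∈ Finset.range (k + 1 + i), z.1 l)|) :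
    (∃ C₁ : ℝ, ∀ k : ℕ, 1 ≤ k → var k ≤ C₁ * (k : ℝ) ^ (-(s - 1))) ∧
    (∃ C₂ : ℝ, ∀ q : ℕ, 1 ≤ q →
        ∑' k : ℕ, var (q + 1 + k) ≤ C₂ * (q : ℝ) ^ (-(s - 2))) ∧
    Summable var := by
  have hs₁ : 1 < s := by linarith
  set C₁ := 2 * C * rhc ^ (-s) / (s - 1)
  have hC₁ : 0 ≤ C₁ := by positivity
  have hvar₀ : ∀ k, 0 ≤ var k := fun k => by
    rw [hvar k]
    exact mul_nonneg zero_le_two (Real.iSup_nonneg fun _ => abs_nonneg _)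
  have hvar₁ : ∀ k : ℕ, 1 ≤ k → var k ≤ C₁ * (k : ℝ) ^ (-(s - 1)) := fun k hk => by
    have htail := tsum_nat_add_le_of_le_rpow_neg (f := fun n : ℕ => (n : ℝ) ^ (-s))
      (fun n => by positivity) zero_le_one hs₁ (fun n _ => (one_mul _).ge) hk
    calc var k ≤ 2 * (C * rhc ^ (-s) * ∑' i : ℕ, ((k + 1 + i : ℕ) : ℝ) ^ (-s)) := by
          rw [hvar k]
          gcongr
          exact iSup_abs_tsum_apply_sum_range_le hv hC.le hrhc hs₁ k
      _ ≤ 2 * (C * rhc ^ (-s) * (1 / (s - 1) * (k : ℝ) ^ (-(s - 1)))) := by gcongr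
      _ = C₁ * (k : ℝ) ^ (-(s - 1)) := by ring
  refine ⟨⟨C₁, hvar₁⟩, ⟨C₁ / (s - 2), fun q hq => ?_⟩,
    summable_of_le_rpow_neg hvar₀ (by linarith) hvar₁⟩
  have htail := tsum_nat_add_le_of_le_rpow_neg hvar₀ hC₁ (by linarith) hvar₁ hq
  rwa [show s - 1 - 1 = s - 2 by ring] at htail
end

section
/- Let M be a symmetric positive-definite real 2d×2d matrix with block form M = [[M₁, M₂],[M₂ᵀ, M₃]] (d×d blocks), and let N be the symmetric positive-semidefinite matrix defined by ⟨x, Nx⟩ = inf_{y∈ℝ^d} ⟨(x,y), M(x,y)⟩ (so N = M₁ - M₂M₃^{-1}M₂ᵀ is the Schur complement). Suppose also ⟨y, Ny⟩ = inf_{x∈ℝ^d} ⟨(x,y), M(x,y)⟩. Then the matrix M̂ := M - diag(½N, ½N) is positive definite. -/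
/-!
The quadratic form of `M̂` at `(x, y)` is `½ (F(x,y) - ⟨x,Nx⟩) + ½ (F(x,y) - ⟨y,Ny⟩)`, where
`F` is the quadratic form of `M`; both brackets are nonnegative by the variational description
of `N`. If the sum vanishes, `(x, y)` minimizes `F` in each block variable separately, so it is a
critical point of the strictly convex `F` and therefore `(x, y) = 0`.
-/

open Matrix

namespace Matrix

lemma IsSymm.dotProduct_mulVec_add_smul {R n : Type*} [CommRing R] [Fintype n]
    {A : Matrix n n R} (hA : A.IsSymm) (v w : n → R) (t : R) :
    (v + t • w) ⬝ᵥ A *ᵥ (v + t • w) =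
      w ⬝ᵥ A *ᵥ w * (t * t) + 2 * (w ⬝ᵥ A *ᵥ v) * t + v ⬝ᵥ A *ᵥ v := by
  have hvw : v ⬝ᵥ A *ᵥ w = w ⬝ᵥ A *ᵥ v := by
    rw [← dotProduct_transpose_mulVec, hA.eq]
  simp only [mulVec_add, mulVec_smul, dotProduct_add, add_dotProduct, dotProduct_smul,
    smul_dotProduct, smul_eq_mul, hvw]
  ring

lemma sumElim_dotProduct_sub_fromBlocks_mulVec_sumElim {R m n : Type*} [CommRing R] [Fintype m]
    [Fintype n] (A : Matrix (m ⊕ n) (m ⊕ n) R) (P : Matrix m m R) (Q : Matrix n n R) (x : m → R)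
    (y : n → R) :
    Sum.elim x y ⬝ᵥ (A - fromBlocks P 0 0 Q) *ᵥ Sum.elim x y =
      Sum.elim x y ⬝ᵥ A *ᵥ Sum.elim x y - x ⬝ᵥ P *ᵥ x - y ⬝ᵥ Q *ᵥ y := by
  simp only [sub_mulVec, dotProduct_sub, fromBlocks_mulVec, zero_mulVec, add_zero, zero_add,
    sumElim_dotProduct_sumElim, Sum.elim_comp_inl, Sum.elim_comp_inr]
  ring

variable {K : Type*} [Field K] [LinearOrder K] [IsStrictOrderedRing K]

lemma IsSymm.dotProduct_mulVec_eq_zero_of_le {n : Type*} [Fintype n] {A : Matrix n n K}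
    (hA : A.IsSymm) {v w : n → K}
    (hmin : ∀ t : K, v ⬝ᵥ A *ᵥ v ≤ (v + t • w) ⬝ᵥ A *ᵥ (v + t • w)) :
    w ⬝ᵥ A *ᵥ v = 0 := by
  have hdisc := discrim_le_zero (a := w ⬝ᵥ A *ᵥ w) (b := 2 * (w ⬝ᵥ A *ᵥ v)) (c := 0) fun t => by
    have := hmin t
    rw [hA.dotProduct_mulVec_add_smul] at this
    linarith
  rw [discrim] at hdisc
  nlinarith [sq_nonneg (w ⬝ᵥ A *ᵥ v)]

lemma PosDef.sumElim_eq_zero_of_le [StarRing K] [TrivialStar K] {m n : Type*} [Fintype m]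
    [Fintype n] {A : Matrix (m ⊕ n) (m ⊕ n) K} (hA : A.PosDef) {x : m → K} {y : n → K}
    (hx : ∀ x', Sum.elim x y ⬝ᵥ A *ᵥ Sum.elim x y ≤ Sum.elim x' y ⬝ᵥ A *ᵥ Sum.elim x' y)
    (hy : ∀ y', Sum.elim x y ⬝ᵥ A *ᵥ Sum.elim x y ≤ Sum.elim x y' ⬝ᵥ A *ᵥ Sum.elim x y') :
    Sum.elim x y = 0 := by
  have hS : A.IsSymm := isHermitian_iff_isSymm.1 hA.isHermitian
  have hcrit_x : Sum.elim x (0 : n → K) ⬝ᵥ A *ᵥ Sum.elim x y = 0 :=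
    hS.dotProduct_mulVec_eq_zero_of_le fun t => by
      have : Sum.elim x y + t • Sum.elim x (0 : n → K) = Sum.elim ((1 + t) • x) y := by
        ext (i | i) <;> simp [add_mul]
      exact this ▸ hx _
  have hcrit_y : Sum.elim (0 : m → K) y ⬝ᵥ A *ᵥ Sum.elim x y = 0 :=
    hS.dotProduct_mulVec_eq_zero_of_le fun t => by
      have : Sum.elim x y + t • Sum.elim (0 : m → K) y = Sum.elim x ((1 + t) • y) := by
        ext (i | i) <;> simp [add_mul]
      exact this ▸ hy _
  have hsplit : Sum.elim x y = Sum.elim x (0 : n → K) + Sum.elim (0 : m → K) y := by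
    ext (i | i) <;> simp
  have hzero : Sum.elim x y ⬝ᵥ A *ᵥ Sum.elim x y = 0 := by
    nth_rw 1 [hsplit]
    rw [add_dotProduct, hcrit_x, hcrit_y, add_zero]
  by_contra hne
  simpa [hzero] using hA.dotProduct_mulVec_pos hne

end Matrix

theorem stmt_15_general (d : ℕ) (M₁ M₂ M₃ N : Matrix (Fin d) (Fin d) ℝ)
    (hM : (Matrix.fromBlocks M₁ M₂ M₂.transpose M₃).PosDef)
    (hNsymm : N.IsSymm)
    (hN₁ : ∀ x : Fin d → ℝ,
        IsGLB {t : ℝ | ∃ y : Fin d → ℝ,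
            t = dotProduct (Sum.elim x y)
                  ((Matrix.fromBlocks M₁ M₂ M₂.transpose M₃).mulVec (Sum.elim x y))}
          (dotProduct x (N.mulVec x)))
    (hN₂ : ∀ y : Fin d → ℝ,
        IsGLB {t : ℝ | ∃ x : Fin d → ℝ,
            t = dotProduct (Sum.elim x y)
                  ((Matrix.fromBlocks M₁ M₂ M₂.transpose M₃).mulVec (Sum.elim x y))}
          (dotProduct y (N.mulVec y))) :
    (Matrix.fromBlocks M₁ M₂ M₂.transpose M₃
      - Matrix.fromBlocks ((1/2 : ℝ) • N) 0 0 ((1/2 : ℝ) • N)).PosDef := by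
  have hD : (fromBlocks ((1/2 : ℝ) • N) 0 0 ((1/2 : ℝ) • N)).IsHermitian :=
    isHermitian_iff_isSymm.2 ((hNsymm.smul _).fromBlocks (by simp) (hNsymm.smul _))
  refine .of_dotProduct_mulVec_pos (hM.isHermitian.sub hD) fun v hv => ?_
  obtain ⟨x, y, rfl⟩ : ∃ x y, v = Sum.elim x y := ⟨_, _, (Sum.elim_comp_inl_inr v).symm⟩
  rw [star_trivial, sumElim_dotProduct_sub_fromBlocks_mulVec_sumElim]
  simp only [smul_mulVec, dotProduct_smul, smul_eq_mul]
  have hNx_le (y' : Fin d → ℝ) := (hN₁ x).1 ⟨y', rfl⟩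
  have hNy_le (x' : Fin d → ℝ) := (hN₂ y).1 ⟨x', rfl⟩
  by_contra! hle
  -- `hle` pins `F(x,y)` below both `⟨x,Nx⟩ ≤ F(x,y')` and `⟨y,Ny⟩ ≤ F(x',y)`.
  refine hv (hM.sumElim_eq_zero_of_le (fun x' => ?_) (fun y' => ?_))
  · linarith [hNx_le y, hNy_le x, hNy_le x']
  · linarith [hNx_le y, hNy_le x, hNx_le y']

/-- Positive definiteness of the symmetrized transfer quadratic form: if `M`
is a positive-definite block matrix `[[M₁,M₂],[M₂ᵀ,M₃]]` and `N` is the Schur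
complement characterized variationally in both arguments, then
`M̂ = M - diag(½N, ½N)` is positive definite. -/
theorem stmt_15 (d : ℕ) (M₁ M₂ M₃ N : Matrix (Fin d) (Fin d) ℝ)
    (hM : (Matrix.fromBlocks M₁ M₂ M₂.transpose M₃).PosDef)
    (hNsymm : N.IsSymm) (hNpsd : N.PosSemidef)
    (hN₁ : ∀ x : Fin d → ℝ,
        IsGLB {t : ℝ | ∃ y : Fin d → ℝ,
            t = dotProduct (Sum.elim x y)
                  ((Matrix.fromBlocks M₁ M₂ M₂.transpose M₃).mulVec (Sum.elim x y))}
          (dotProduct x (N.mulVec x)))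
    (hN₂ : ∀ y : Fin d → ℝ,
        IsGLB {t : ℝ | ∃ x : Fin d → ℝ,
            t = dotProduct (Sum.elim x y)
                  ((Matrix.fromBlocks M₁ M₂ M₂.transpose M₃).mulVec (Sum.elim x y))}
          (dotProduct y (N.mulVec y))) :
    (Matrix.fromBlocks M₁ M₂ M₂.transpose M₃
      - Matrix.fromBlocks ((1/2 : ℝ) • N) 0 0 ((1/2 : ℝ) • N)).PosDef :=
  stmt_15_general d M₁ M₂ M₃ N hM hNsymm hN₁ hN₂
end

section
/- Let M̂ = [[M̂₁, M̂₂],[M̂₂ᵀ, M̂₃]] be a symmetric positive-definite 2d×2d real matrix and F a symmetric positive-definite d×d matrix. Then the Gaussian function φ(x) = exp(-½⟨x, Fx⟩) is an eigenfunction of the integral operator (Gφ)(x) = ∫_{ℝ^d} exp(-½⟨(x,y), M̂(x,y)⟩) φ(y) dy if and only if F satisfies the Riccati equation F = M̂₁ - M̂₂(M̂₃ + F)^{-1}M̂₂ᵀ; in that case the eigenvalue is √((2π)^d / det(M̂₃ + F)). -/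
/-!
Completing the square in `y`: the exponent of the integrand is `-½` times
`⟨x, M̂₁x⟩ + 2⟨M̂₂ᵀx, y⟩ + ⟨y, (M̂₃ + F)y⟩`, so the Gaussian integral over `y` equals
`√((2π)^d / det(M̂₃ + F)) · exp(-½⟨x, Gx⟩)`, where `G = M̂₁ - M̂₂(M̂₃ + F)⁻¹M̂₂ᵀ` is a Schur
complement.
This is a multiple of `exp(-½⟨x, Fx⟩)` iff the two symmetric quadratic forms agree (evaluating at
`x = 0` fixes the constant), i.e. iff `F = G`.
-/

open MeasureTheory Matrix Real
open scoped MatrixOrder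

section Gaussian

variable {ι : Type*} [Fintype ι]

theorem integral_exp_neg_half_dotProduct_self :
    ∫ w : ι → ℝ, exp (-(1 / 2) * (w ⬝ᵥ w)) = √(2 * π) ^ Fintype.card ι := by
  have hprod : ∀ w : ι → ℝ, exp (-(1 / 2) * (w ⬝ᵥ w)) = ∏ i, exp (-(1 / 2) * w i ^ 2) := by
    intro w
    simp only [← Real.exp_sum, dotProduct, Finset.mul_sum, sq]
  simp_rw [hprod]
  rw [integral_fintype_prod_volume_eq_pow (fun t : ℝ => exp (-(1 / 2) * t ^ 2)),
    integral_gaussian]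
  norm_num [div_div_eq_mul_div, mul_comm]

variable [DecidableEq ι]

theorem integral_comp_mulVec {E : Type*} [NormedAddCommGroup E] [NormedSpace ℝ E]
    {R : Matrix ι ι ℝ} (hR : R.det ≠ 0) (f : (ι → ℝ) → E) :
    ∫ z, f (R *ᵥ z) = |R.det|⁻¹ • ∫ w, f w := by
  let e :=
    (toLinearEquiv' R (invertibleOfIsUnitDet R hR.isUnit)).toContinuousLinearEquiv.toHomeomorph
  have hmap : Measure.map e volume = ENNReal.ofReal |R.det|⁻¹ • volume := by
    rw [← abs_inv]; exact Real.map_matrix_volume_pi_eq_smul_volume_pi hR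
  have := e.measurableEmbedding.integral_map (μ := volume) f
  rw [hmap, integral_smul_measure, ENNReal.toReal_ofReal (by positivity)] at this
  exact this.symm

theorem integral_exp_neg_half_dotProduct_mulVec {S : Matrix ι ι ℝ} (hS : S.PosDef) :
    ∫ z : ι → ℝ, exp (-(1 / 2) * (z ⬝ᵥ S *ᵥ z)) = √((2 * π) ^ Fintype.card ι / S.det) := by
  -- `S = Rᵀ R`, and the substitution `w = R z` reduces to the standard Gaussian.
  obtain ⟨R, rfl⟩ := CStarAlgebra.nonneg_iff_eq_star_mul_self.mp hS.posSemidef.nonneg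
  have hdet : (star R * R).det = R.det ^ 2 := by
    rw [det_mul, star_eq_conjTranspose, det_conjTranspose, star_trivial, sq]
  have hR : R.det ≠ 0 := fun h => hS.det_pos.ne' (by rw [hdet, h, sq, mul_zero])
  have hquad : ∀ z : ι → ℝ, z ⬝ᵥ (star R * R) *ᵥ z = R *ᵥ z ⬝ᵥ R *ᵥ z := by
    intro z
    rw [← mulVec_mulVec, dotProduct_mulVec, star_eq_conjTranspose,
      conjTranspose_eq_transpose_of_trivial, vecMul_transpose]
  simp_rw [hquad]
  rw [integral_comp_mulVec hR (fun w => exp (-(1 / 2) * (w ⬝ᵥ w))),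
    integral_exp_neg_half_dotProduct_self, hdet, Real.sqrt_div' _ (sq_nonneg _),
    Real.sqrt_sq_eq_abs, smul_eq_mul, div_eq_inv_mul]
  congr 1
  rw [eq_comm, Real.sqrt_eq_iff_eq_sq (by positivity) (by positivity), pow_right_comm,
    Real.sq_sqrt (by positivity)]

theorem integral_exp_neg_half_dotProduct_mulVec_add_dotProduct {S : Matrix ι ι ℝ} (hS : S.PosDef)
    (b : ι → ℝ) :
    ∫ y : ι → ℝ, exp (-(1 / 2) * (y ⬝ᵥ S *ᵥ y) + b ⬝ᵥ y)
      = √((2 * π) ^ Fintype.card ι / S.det) * exp (1 / 2 * (b ⬝ᵥ S⁻¹ *ᵥ b)) := by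
  set y₀ := S⁻¹ *ᵥ b
  have hSy₀ : S *ᵥ y₀ = b := by
    rw [mulVec_mulVec, mul_nonsing_inv _ hS.det_pos.ne'.isUnit, one_mulVec]
  have hsymm : ∀ v w : ι → ℝ, v ⬝ᵥ S *ᵥ w = w ⬝ᵥ S *ᵥ v := by
    intro v w
    rw [dotProduct_mulVec, ← mulVec_transpose, ← conjTranspose_eq_transpose_of_trivial,
      hS.isHermitian.eq, dotProduct_comm]
  have hsquare : ∀ y : ι → ℝ, -(1 / 2) * (y ⬝ᵥ S *ᵥ y) + b ⬝ᵥ y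
      = -(1 / 2) * ((y - y₀) ⬝ᵥ S *ᵥ (y - y₀)) + 1 / 2 * (b ⬝ᵥ y₀) := by
    intro y
    have hy₀ : y₀ ⬝ᵥ S *ᵥ y = b ⬝ᵥ y := by rw [hsymm, hSy₀, dotProduct_comm]
    rw [mulVec_sub, dotProduct_sub, sub_dotProduct, sub_dotProduct, hsymm y y₀, hy₀, hSy₀,
      dotProduct_comm y₀ b]
    ring
  simp_rw [hsquare, exp_add]
  rw [integral_mul_const, integral_sub_right_eq_self (fun z => exp (-(1 / 2) * (z ⬝ᵥ S *ᵥ z))),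
    integral_exp_neg_half_dotProduct_mulVec hS]

end Gaussian

variable {m n : Type*} [Fintype m] [Fintype n]

theorem sumElim_dotProduct_fromBlocks_mulVec_sumElim {R : Type*} [CommRing R]
    (A : Matrix m m R) (B : Matrix m n R) (D : Matrix n n R) (x : m → R) (y : n → R) :
    Sum.elim x y ⬝ᵥ fromBlocks A B Bᵀ D *ᵥ Sum.elim x y
      = x ⬝ᵥ A *ᵥ x + 2 * (Bᵀ *ᵥ x ⬝ᵥ y) + y ⬝ᵥ D *ᵥ y := by
  rw [fromBlocks_mulVec, Sum.elim_comp_inl, Sum.elim_comp_inr, sumElim_dotProduct_sumElim,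
    dotProduct_add, dotProduct_add, dotProduct_mulVec x B, ← mulVec_transpose,
    dotProduct_comm y (Bᵀ *ᵥ x)]
  ring

theorem le_of_forall_dotProduct_mulVec_le {A B : Matrix n n ℝ} (hA : A.IsHermitian)
    (hB : B.IsHermitian) (h : ∀ x, x ⬝ᵥ A *ᵥ x ≤ x ⬝ᵥ B *ᵥ x) : A ≤ B :=
  .of_dotProduct_mulVec_nonneg (hB.sub hA) fun x => by
    simpa [sub_mulVec, dotProduct_sub] using h x

theorem eq_of_forall_dotProduct_mulVec_eq {A B : Matrix n n ℝ} (hA : A.IsHermitian)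
    (hB : B.IsHermitian) (h : ∀ x, x ⬝ᵥ A *ᵥ x = x ⬝ᵥ B *ᵥ x) : A = B :=
  le_antisymm (le_of_forall_dotProduct_mulVec_le hA hB fun x => (h x).le)
    (le_of_forall_dotProduct_mulVec_le hB hA fun x => (h x).ge)

theorem eq_of_forall_mul_exp_dotProduct_mulVec_eq {A B : Matrix n n ℝ} (hA : A.IsHermitian)
    (hB : B.IsHermitian) {a b : ℝ} (ha : a ≠ 0)
    (h : ∀ x, a * exp (-(1 / 2) * (x ⬝ᵥ A *ᵥ x)) = b * exp (-(1 / 2) * (x ⬝ᵥ B *ᵥ x))) :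
    A = B := by
  have hab : a = b := by simpa using h 0
  subst hab
  refine eq_of_forall_dotProduct_mulVec_eq hA hB fun x => ?_
  have := exp_injective (mul_left_cancel₀ ha (h x))
  linarith

variable [DecidableEq n]

theorem integral_exp_fromBlocks_mul_exp (A : Matrix m m ℝ) (B : Matrix m n ℝ)
    (D F : Matrix n n ℝ) (hDF : (D + F).PosDef) (x : m → ℝ) :
    ∫ y : n → ℝ, exp (-(1 / 2) * (Sum.elim x y ⬝ᵥ fromBlocks A B Bᵀ D *ᵥ Sum.elim x y))
        * exp (-(1 / 2) * (y ⬝ᵥ F *ᵥ y))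
      = √((2 * π) ^ Fintype.card n / (D + F).det)
        * exp (-(1 / 2) * (x ⬝ᵥ (A - B * (D + F)⁻¹ * Bᵀ) *ᵥ x)) := by
  have hexp : ∀ y : n → ℝ,
      exp (-(1 / 2) * (Sum.elim x y ⬝ᵥ fromBlocks A B Bᵀ D *ᵥ Sum.elim x y))
        * exp (-(1 / 2) * (y ⬝ᵥ F *ᵥ y))
      = exp (-(1 / 2) * (x ⬝ᵥ A *ᵥ x))
        * exp (-(1 / 2) * (y ⬝ᵥ (D + F) *ᵥ y) + -(Bᵀ *ᵥ x) ⬝ᵥ y) := by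
    intro y
    rw [← exp_add, ← exp_add, sumElim_dotProduct_fromBlocks_mulVec_sumElim, add_mulVec,
      dotProduct_add, neg_dotProduct]
    ring_nf
  have hschur : -(Bᵀ *ᵥ x) ⬝ᵥ (D + F)⁻¹ *ᵥ -(Bᵀ *ᵥ x) = x ⬝ᵥ (B * (D + F)⁻¹ * Bᵀ) *ᵥ x := by
    rw [mulVec_neg, neg_dotProduct, dotProduct_neg, neg_neg, mulVec_mulVec,
      mulVec_transpose B x, ← dotProduct_mulVec, mulVec_mulVec, ← Matrix.mul_assoc]
  simp_rw [hexp]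
  rw [integral_const_mul, integral_exp_neg_half_dotProduct_mulVec_add_dotProduct hDF, hschur,
    mul_left_comm, ← exp_add, sub_mulVec, dotProduct_sub]
  ring_nf

theorem stmt_16_general (d : ℕ) (M₁ M₂ M₃ F : Matrix (Fin d) (Fin d) ℝ)
    (hM : (Matrix.fromBlocks M₁ M₂ M₂.transpose M₃).PosDef)
    (hF : F.PosDef) :
    ((∃ lam : ℝ, ∀ x : Fin d → ℝ,
        (∫ y : Fin d → ℝ,
          Real.exp (-(1/2) * dotProduct (Sum.elim x y)
              ((Matrix.fromBlocks M₁ M₂ M₂.transpose M₃).mulVec (Sum.elim x y)))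
            * Real.exp (-(1/2) * dotProduct y (F.mulVec y)))
          = lam * Real.exp (-(1/2) * dotProduct x (F.mulVec x)))
      ↔ F = M₁ - M₂ * (M₃ + F)⁻¹ * M₂.transpose) ∧
    (F = M₁ - M₂ * (M₃ + F)⁻¹ * M₂.transpose →
      ∀ x : Fin d → ℝ,
        (∫ y : Fin d → ℝ,
          Real.exp (-(1/2) * dotProduct (Sum.elim x y)
              ((Matrix.fromBlocks M₁ M₂ M₂.transpose M₃).mulVec (Sum.elim x y)))
            * Real.exp (-(1/2) * dotProduct y (F.mulVec y)))
          = Real.sqrt ((2 * Real.pi) ^ d / (M₃ + F).det)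
              * Real.exp (-(1/2) * dotProduct x (F.mulVec x))) := by
  have hM₃ : M₃.PosDef := by
    convert hM.submatrix Sum.inr_injective
    ext; simp
  have hS : (M₃ + F).PosDef := hM₃.add hF
  have hSchur : (M₁ - M₂ * (M₃ + F)⁻¹ * M₂ᵀ).IsHermitian := by
    have := isHermitian_mul_mul_conjTranspose M₂ hS.inv.isHermitian
    rw [conjTranspose_eq_transpose_of_trivial] at this
    exact (isHermitian_fromBlocks_iff.mp hM.isHermitian).1.sub this
  have key := integral_exp_fromBlocks_mul_exp M₁ M₂ M₃ F hS
  rw [Fintype.card_fin] at key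
  refine ⟨⟨fun ⟨lam, hlam⟩ => ?_, fun h => ⟨_, fun x => by rw [key, ← h]⟩⟩,
    fun h x => by rw [key, ← h]⟩
  have hc : √((2 * π) ^ d / (M₃ + F).det) ≠ 0 :=
    (sqrt_pos.mpr (div_pos (by positivity) hS.det_pos)).ne'
  exact (eq_of_forall_mul_exp_dotProduct_mulVec_eq hSchur hF.isHermitian hc
    fun x => (key x).symm.trans (hlam x)).symm

/-- Gaussian eigenfunctions of the Gaussian transfer operator: for a
positive-definite block matrix `M̂ = [[M̂₁,M̂₂],[M̂₂ᵀ,M̂₃]]` and a symmetric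
positive-definite `F`, the Gaussian `φ(x) = exp(-½⟨x,Fx⟩)` is an eigenfunction
of `(Gφ)(x) = ∫ exp(-½⟨(x,y),M̂(x,y)⟩) φ(y) dy` iff `F` solves the Riccati
equation `F = M̂₁ - M̂₂(M̂₃+F)⁻¹M̂₂ᵀ`, with eigenvalue
`√((2π)^d / det(M̂₃+F))`. -/
theorem stmt_16 (d : ℕ) (M₁ M₂ M₃ F : Matrix (Fin d) (Fin d) ℝ)
    (hM : (Matrix.fromBlocks M₁ M₂ M₂.transpose M₃).PosDef)
    (hFsymm : F.IsSymm) (hF : F.PosDef) :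
    ((∃ lam : ℝ, ∀ x : Fin d → ℝ,
        (∫ y : Fin d → ℝ,
          Real.exp (-(1/2) * dotProduct (Sum.elim x y)
              ((Matrix.fromBlocks M₁ M₂ M₂.transpose M₃).mulVec (Sum.elim x y)))
            * Real.exp (-(1/2) * dotProduct y (F.mulVec y)))
          = lam * Real.exp (-(1/2) * dotProduct x (F.mulVec x)))
      ↔ F = M₁ - M₂ * (M₃ + F)⁻¹ * M₂.transpose) ∧
    (F = M₁ - M₂ * (M₃ + F)⁻¹ * M₂.transpose →
      ∀ x : Fin d → ℝ,
        (∫ y : Fin d → ℝ,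
          Real.exp (-(1/2) * dotProduct (Sum.elim x y)
              ((Matrix.fromBlocks M₁ M₂ M₂.transpose M₃).mulVec (Sum.elim x y)))
            * Real.exp (-(1/2) * dotProduct y (F.mulVec y)))
          = Real.sqrt ((2 * Real.pi) ^ d / (M₃ + F).det)
              * Real.exp (-(1/2) * dotProduct x (F.mulVec x))) :=
  stmt_16_general d M₁ M₂ M₃ F hM hF
end

section
/- Let A, B, C be real d×d matrices with A, C symmetric positive definite, and suppose C solves C = A - B C^{-1} Bᵀ. Let σ be a permutation (reversal) matrix with σ² = I, σAσ = A, Bᵀ = σBσ. Then N := σCσ - BC^{-1}Bᵀ equals C - Bᵀ(σCσ)^{-1}B and satisfies σNσ = N. -/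
/-! Conjugation by an involution `σ` is a ring automorphism of the matrix algebra, so
`Bᵀ (σCσ)⁻¹ B = σ (B C⁻¹ Bᵀ) σ`. The Riccati equation identifies `B C⁻¹ Bᵀ` with `A - C`,
and since `σAσ = A` both expressions for `N` equal `σCσ + C - A`, which is `σ`-invariant. -/

section Involution

variable {α : Type*} [Ring α] {σ : α}

theorem conj_conj_of_mul_self_eq_one (hσ : σ * σ = 1) (x : α) :
    σ * (σ * x * σ) * σ = x := by
  simp only [← mul_assoc, hσ, one_mul, mul_assoc x, mul_one]

theorem conj_mul_conj_of_mul_self_eq_one (hσ : σ * σ = 1) (x y : α) :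
    σ * x * σ * (σ * y * σ) = σ * (x * y) * σ := by
  simp only [← mul_assoc, mul_assoc _ σ σ, hσ, mul_one]

end Involution

namespace Matrix

variable {n R : Type*} [Fintype n] [DecidableEq n] [CommRing R] {σ : Matrix n n R}

theorem inv_conj_of_mul_self_eq_one (hσ : σ * σ = 1) (C : Matrix n n R) :
    (σ * C * σ)⁻¹ = σ * C⁻¹ * σ := by
  rw [mul_inv_rev, mul_inv_rev, inv_eq_right_inv hσ, mul_assoc]

theorem transpose_mul_inv_conj_mul_of_transpose_eq_conj (hσ : σ * σ = 1)
    {B : Matrix n n R} (hBT : Bᵀ = σ * B * σ) (C : Matrix n n R) :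
    Bᵀ * (σ * C * σ)⁻¹ * B = σ * (B * C⁻¹ * Bᵀ) * σ := by
  have hB : B = σ * Bᵀ * σ := by rw [hBT, conj_conj_of_mul_self_eq_one hσ]
  calc Bᵀ * (σ * C * σ)⁻¹ * B = σ * B * σ * (σ * C⁻¹ * σ) * (σ * Bᵀ * σ) := by
        rw [inv_conj_of_mul_self_eq_one hσ, ← hBT, ← hB]
    _ = σ * (B * C⁻¹ * Bᵀ) * σ := by
        rw [conj_mul_conj_of_mul_self_eq_one hσ, conj_mul_conj_of_mul_self_eq_one hσ]

end Matrix

theorem stmt_17_general (d : ℕ) (A B C σ : Matrix (Fin d) (Fin d) ℝ)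
    (hRic : C = A - B * C⁻¹ * B.transpose)
    (hσ2 : σ * σ = 1) (hσA : σ * A * σ = A)
    (hBT : B.transpose = σ * B * σ) :
    σ * C * σ - B * C⁻¹ * B.transpose
        = C - B.transpose * (σ * C * σ)⁻¹ * B ∧
    σ * (σ * C * σ - B * C⁻¹ * B.transpose) * σ
        = σ * C * σ - B * C⁻¹ * B.transpose := by
  have hM : B * C⁻¹ * B.transpose = A - C := eq_sub_iff_add_eq.2 (eq_sub_iff_add_eq'.1 hRic)
  have hN : σ * C * σ - B * C⁻¹ * B.transpose = C - B.transpose * (σ * C * σ)⁻¹ * B := by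
    rw [Matrix.transpose_mul_inv_conj_mul_of_transpose_eq_conj hσ2 hBT, hM, mul_sub, sub_mul, hσA]
    abel
  refine ⟨hN, ?_⟩
  rw [mul_sub, sub_mul, conj_conj_of_mul_self_eq_one hσ2, hN,
    Matrix.transpose_mul_inv_conj_mul_of_transpose_eq_conj hσ2 hBT]

/-- Consistency of the two Schur-complement expressions for the marginal
Hessian `N` of the Gaussian bulk measure: if `C` is symmetric positive
definite and solves `C = A - B C⁻¹ Bᵀ`, with reversal symmetries
`σ² = 1`, `σAσ = A`, `Bᵀ = σBσ`, then
`N := σCσ - BC⁻¹Bᵀ` equals `C - Bᵀ(σCσ)⁻¹B` and satisfies `σNσ = N`. -/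
theorem stmt_17 (d : ℕ) (A B C σ : Matrix (Fin d) (Fin d) ℝ)
    (hA : A.PosDef) (hAsymm : A.IsSymm)
    (hC : C.PosDef) (hCsymm : C.IsSymm)
    (hRic : C = A - B * C⁻¹ * B.transpose)
    (hσ2 : σ * σ = 1) (hσA : σ * A * σ = A)
    (hBT : B.transpose = σ * B * σ) :
    σ * C * σ - B * C⁻¹ * B.transpose
        = C - B.transpose * (σ * C * σ)⁻¹ * B ∧
    σ * (σ * C * σ - B * C⁻¹ * B.transpose) * σ
        = σ * C * σ - B * C⁻¹ * B.transpose :=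
  stmt_17_general d A B C σ hRic hσ2 hσA hBT
end
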